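/- arXiv:2512.21254 — 2 statements merged into one kernel-verified Lean document; each statement's English description precedes it below -/
import Mathlib

section
/- Fix p ∈ [1/2,1). Then lim_{d→∞} Var[R_{N_d}/N_d] = 0; equivalently, with h_p(u) = (p-qu²)/(p+qu²), ℓ_p(u) = ln((p+qu²)/u), q = 1-p, one has d² ∫₀¹ u^{d-1} h_p(u) ℓ_p(u) du - (d ∫₀¹ u^{d-1} h_p(u) du)² → 0 as d → ∞. -/
open MeasureTheory ProbabilityTheory Real

/-- Partial sums of the walk: `S n = X 0 + ⋯ + X (n-1)`. -/
def walkSum {Ω : Type*} (X : ℕ → Ω → ℤ) (n : ℕ) (ω : Ω) : ℤ :=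
  ∑ k ∈ Finset.range n, X k ω

/-- First hitting time of level `d` (junk value `0` if the level is never hit). -/
noncomputable def hitTime {Ω : Type*} (X : ℕ → Ω → ℤ) (d : ℤ) (ω : Ω) : ℕ :=
  sInf {n : ℕ | walkSum X n ω = d}

/-- Number of `+1` steps ("wins") among the first `n` steps. -/
def wins {Ω : Type*} (X : ℕ → Ω → ℤ) (n : ℕ) (ω : Ω) : ℕ :=
  ((Finset.range n).filter (fun k => X k ω = 1)).card

open Filter Topology

section auxMeas
variable {Ω : Type*} [MeasurableSpace Ω] (X : ℕ → Ω → ℤ)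

lemma walkSum_meas (hmeas : ∀ n, Measurable (X n)) (n : ℕ) :
    Measurable (fun ω => walkSum X n ω) := by
  unfold walkSum; exact Finset.measurable_sum _ (fun k _ => hmeas k)

lemma hitTime_meas (hmeas : ∀ n, Measurable (X n)) (d : ℤ) :
    Measurable (hitTime X d) := by
  have hS := walkSum_meas X hmeas
  apply measurable_to_countable'
  intro k
  rcases Nat.eq_zero_or_pos k with hk | hk
  · subst hk
    have : hitTime X d ⁻¹' {0} =
        ((fun ω => walkSum X 0 ω) ⁻¹' {d}) ∪ ⋂ n, ((fun ω => walkSum X n ω) ⁻¹' {d})ᶜ := by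
      ext ω
      simp only [Set.mem_preimage, Set.mem_singleton_iff, Set.mem_union, Set.mem_iInter,
        Set.mem_compl_iff, hitTime, Nat.sInf_eq_zero]
      constructor
      · rintro (h | h)
        · exact Or.inl h
        · exact Or.inr fun n hn => (Set.eq_empty_iff_forall_notMem.1 h n) hn
      · rintro (h | h)
        · exact Or.inl h
        · exact Or.inr (Set.eq_empty_iff_forall_notMem.2 fun n hn => h n hn)
    rw [this]
    exact ((hS 0) (measurableSet_singleton d)).union
      (MeasurableSet.iInter fun n => ((hS n) (measurableSet_singleton d)).compl)
  · have : hitTime X d ⁻¹' {k} =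
        ((fun ω => walkSum X k ω) ⁻¹' {d}) ∩
          ⋂ j ∈ Set.Iio k, ((fun ω => walkSum X j ω) ⁻¹' {d})ᶜ := by
      ext ω
      simp only [Set.mem_preimage, Set.mem_singleton_iff, Set.mem_inter_iff, Set.mem_iInter,
        Set.mem_compl_iff, Set.mem_Iio, hitTime]
      constructor
      · intro h
        have hne : {n : ℕ | walkSum X n ω = d}.Nonempty := by
          by_contra hemp
          rw [Set.not_nonempty_iff_eq_empty.1 hemp] at h
          simp [Nat.sInf_empty] at h; omega
        refine ⟨h ▸ Nat.sInf_mem hne, fun j hj => Nat.notMem_of_lt_sInf (h ▸ hj)⟩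
      · rintro ⟨h1, h2⟩
        refine le_antisymm (Nat.sInf_le h1) ?_
        refine le_csInf ⟨k, h1⟩ fun m hm => ?_
        by_contra hlt
        exact h2 m (not_le.1 hlt) hm
    rw [this]
    exact ((hS k) (measurableSet_singleton d)).inter
      (MeasurableSet.biInter (Set.to_countable _)
        fun j _ => ((hS j) (measurableSet_singleton d)).compl)

lemma wins_meas (hmeas : ∀ n, Measurable (X n)) (n : ℕ) :
    Measurable (fun ω => (wins X n ω : ℝ)) := by
  have : (fun ω => (wins X n ω : ℝ)) =
      fun ω => ∑ k ∈ Finset.range n, (if X k ω = 1 then (1:ℝ) else 0) := by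
    funext ω
    unfold wins
    rw [Finset.card_filter]
    push_cast
    rfl
  rw [this]
  exact Finset.measurable_sum _ fun k _ =>
    Measurable.ite ((hmeas k) (measurableSet_singleton 1)) measurable_const measurable_const

lemma comp_meas' {Ω : Type*} [MeasurableSpace Ω] (g : ℕ → Ω → ℝ) (hg : ∀ n, Measurable (g n))
    (N : Ω → ℕ) (hN : Measurable N) : Measurable (fun ω => g (N ω) ω) := by
  have h : Measurable (fun q : Ω × ℕ => g q.2 q.1) :=
    measurable_from_prod_countable_left (fun n => hg n)
  exact h.comp (measurable_id.prodMk hN)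

lemma ratio_meas (hmeas : ∀ n, Measurable (X n)) (d : ℤ) :
    Measurable (fun ω => (wins X (hitTime X d ω) ω : ℝ) / (hitTime X d ω)) :=
  comp_meas' (fun n ω => (wins X n ω : ℝ) / (n : ℝ))
    (fun n => (wins_meas X hmeas n).div measurable_const)
    (hitTime X d) (hitTime_meas X hmeas d)

end auxMeas

section auxDist
variable {Ω : Type*} [MeasurableSpace Ω] (P : Measure Ω) [IsProbabilityMeasure P]
    (p : ℝ) (X : ℕ → Ω → ℤ)

lemma pm_compl_null (hp : p ∈ Set.Ico (1/2 : ℝ) 1) (hmeas : ∀ n, Measurable (X n))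
    (hup : ∀ n, P {ω | X n ω = 1} = ENNReal.ofReal p)
    (hdown : ∀ n, P {ω | X n ω = -1} = ENNReal.ofReal (1 - p)) (n : ℕ) :
    P ({ω | X n ω = 1} ∪ {ω | X n ω = -1})ᶜ = 0 := by
  have hB1 : MeasurableSet {ω | X n ω = 1} := (hmeas n) (measurableSet_singleton 1)
  have hB2 : MeasurableSet {ω | X n ω = -1} := (hmeas n) (measurableSet_singleton (-1))
  have hdisj : Disjoint {ω | X n ω = 1} {ω | X n ω = -1} := by
    rw [Set.disjoint_left]; intro ω h1 h2; simp only [Set.mem_setOf_eq] at h1 h2; omega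
  rw [measure_compl (hB1.union hB2) (measure_ne_top _ _), measure_union hdisj hB2, hup, hdown,
    ← ENNReal.ofReal_add (by linarith [hp.1]) (by linarith [hp.2]), measure_univ]
  norm_num

lemma ae_pm (hp : p ∈ Set.Ico (1/2 : ℝ) 1) (hmeas : ∀ n, Measurable (X n))
    (hup : ∀ n, P {ω | X n ω = 1} = ENNReal.ofReal p)
    (hdown : ∀ n, P {ω | X n ω = -1} = ENNReal.ofReal (1 - p)) :
    ∀ᵐ ω ∂P, ∀ n, X n ω = 1 ∨ X n ω = -1 := by
  rw [ae_all_iff]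
  intro n
  refine measure_mono_null (fun ω hω => ?_) (pm_compl_null P p X hp hmeas hup hdown n)
  simp only [Set.mem_compl_iff, Set.mem_union, Set.mem_setOf_eq] at *
  tauto

lemma map_eq (hp : p ∈ Set.Ico (1/2 : ℝ) 1) (hmeas : ∀ n, Measurable (X n))
    (hup : ∀ n, P {ω | X n ω = 1} = ENNReal.ofReal p)
    (hdown : ∀ n, P {ω | X n ω = -1} = ENNReal.ofReal (1 - p)) (n : ℕ) :
    Measure.map (X n) P =
      ENNReal.ofReal p • Measure.dirac (1 : ℤ)
        + ENNReal.ofReal (1-p) • Measure.dirac (-1 : ℤ) := by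
  classical
  have hB1 : MeasurableSet {ω | X n ω = 1} := (hmeas n) (measurableSet_singleton 1)
  have hB2 : MeasurableSet {ω | X n ω = -1} := (hmeas n) (measurableSet_singleton (-1))
  have hdisj : Disjoint {ω | X n ω = 1} {ω | X n ω = -1} := by
    rw [Set.disjoint_left]; intro ω h1 h2; simp only [Set.mem_setOf_eq] at h1 h2; omega
  ext s hs
  rw [Measure.map_apply (hmeas n) hs]
  set T := X n ⁻¹' s with hT
  set U := {ω | X n ω = 1} ∪ {ω | X n ω = -1} with hU
  have hTmeas : MeasurableSet T := (hmeas n) hs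
  have key : P T = P (T ∩ {ω | X n ω = 1}) + P (T ∩ {ω | X n ω = -1}) := by
    have h0 : P (T ∩ U) + P (T \ U) = P T := measure_inter_add_diff T (hB1.union hB2)
    have h1 : P (T \ U) = 0 :=
      measure_mono_null (fun ω hω => hω.2) (pm_compl_null P p X hp hmeas hup hdown n)
    have h2 : T ∩ U = (T ∩ {ω | X n ω = 1}) ∪ (T ∩ {ω | X n ω = -1}) := by
      rw [hU, Set.inter_union_distrib_left]
    rw [← h0, h1, add_zero, h2,
      measure_union (hdisj.mono Set.inter_subset_right Set.inter_subset_right) (hTmeas.inter hB2)]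
  have e1 : T ∩ {ω | X n ω = 1} = if (1:ℤ) ∈ s then {ω | X n ω = 1} else ∅ := by
    ext ω
    by_cases h : (1:ℤ) ∈ s <;>
      simp only [h, if_true, if_false, Set.mem_inter_iff, Set.mem_preimage, Set.mem_setOf_eq,
        Set.mem_empty_iff_false, iff_def, hT] <;> constructor <;> intro hh
    · exact hh.2
    · exact ⟨hh ▸ h, hh⟩
    · exact (hh.2 ▸ h) hh.1 |>.elim
    · exact hh.elim
  have e2 : T ∩ {ω | X n ω = -1} = if (-1:ℤ) ∈ s then {ω | X n ω = -1} else ∅ := by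
    ext ω
    by_cases h : (-1:ℤ) ∈ s <;>
      simp only [h, if_true, if_false, Set.mem_inter_iff, Set.mem_preimage, Set.mem_setOf_eq,
        Set.mem_empty_iff_false, iff_def, hT] <;> constructor <;> intro hh
    · exact hh.2
    · exact ⟨hh ▸ h, hh⟩
    · exact (hh.2 ▸ h) hh.1 |>.elim
    · exact hh.elim
  rw [key, e1, e2]
  rw [Measure.add_apply, Measure.smul_apply, Measure.smul_apply,
    Measure.dirac_apply' _ hs, Measure.dirac_apply' _ hs]
  by_cases h1 : (1:ℤ) ∈ s <;> by_cases h2 : (-1:ℤ) ∈ s <;>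
    simp [h1, h2, hup, hdown, Set.indicator_of_mem, Set.indicator_of_notMem]

lemma map_eq' (hm : ∀ n, Measure.map (X n) P =
      ENNReal.ofReal p • Measure.dirac (1 : ℤ) + ENNReal.ofReal (1-p) • Measure.dirac (-1 : ℤ))
    (hmeas : ∀ n, Measurable (X n)) (i : ℕ) :
    IdentDistrib (fun ω => (X i ω : ℝ)) (fun ω => (X 0 ω : ℝ)) P P := by
  have hid : IdentDistrib (X i) (X 0) P P :=
    ⟨(hmeas i).aemeasurable, (hmeas 0).aemeasurable, by rw [hm i, hm 0]⟩
  exact hid.comp (measurable_from_top : Measurable fun z : ℤ => (z : ℝ))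

lemma integral_step (hp : p ∈ Set.Ico (1/2 : ℝ) 1) (hmeas : ∀ n, Measurable (X n))
    (hup : ∀ n, P {ω | X n ω = 1} = ENNReal.ofReal p)
    (hdown : ∀ n, P {ω | X n ω = -1} = ENNReal.ofReal (1 - p))
    (hpm : ∀ᵐ ω ∂P, ∀ n, X n ω = 1 ∨ X n ω = -1) :
    ∫ ω, (X 0 ω : ℝ) ∂P = 2*p - 1 := by
  have hB1 : MeasurableSet {ω | X 0 ω = 1} := (hmeas 0) (measurableSet_singleton 1)
  have hB2 : MeasurableSet {ω | X 0 ω = -1} := (hmeas 0) (measurableSet_singleton (-1))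
  have hcongr : (fun ω => (X 0 ω : ℝ)) =ᵐ[P]
      fun ω => Set.indicator {ω | X 0 ω = 1} (fun _ => (1:ℝ)) ω
        + Set.indicator {ω | X 0 ω = -1} (fun _ => (-1:ℝ)) ω := by
    filter_upwards [hpm] with ω hω
    rcases hω 0 with h | h <;>
      simp [Set.indicator_apply, Set.mem_setOf_eq, h]
  rw [integral_congr_ae hcongr, integral_add, integral_indicator_const _ hB1,
    integral_indicator_const _ hB2, measureReal_def, measureReal_def, hup, hdown,
    ENNReal.toReal_ofReal (by linarith [hp.1]), ENNReal.toReal_ofReal (by linarith [hp.2])]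
  · simp only [smul_eq_mul]; ring
  · exact (integrable_const (1:ℝ)).indicator hB1
  · exact (integrable_const (-1:ℝ)).indicator hB2

lemma slln (hp : p ∈ Set.Ico (1/2 : ℝ) 1) (hmeas : ∀ n, Measurable (X n))
    (hindep : iIndepFun X P)
    (hup : ∀ n, P {ω | X n ω = 1} = ENNReal.ofReal p)
    (hdown : ∀ n, P {ω | X n ω = -1} = ENNReal.ofReal (1 - p))
    (hm : ∀ n, Measure.map (X n) P =
      ENNReal.ofReal p • Measure.dirac (1 : ℤ) + ENNReal.ofReal (1-p) • Measure.dirac (-1 : ℤ))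
    (hpm : ∀ᵐ ω ∂P, ∀ n, X n ω = 1 ∨ X n ω = -1) :
    ∀ᵐ ω ∂P, Tendsto (fun n : ℕ => (∑ i ∈ Finset.range n, (X i ω : ℝ)) / n)
      atTop (𝓝 (2*p - 1)) := by
  have hcast : Measurable fun z : ℤ => (z : ℝ) := measurable_from_top
  have hint : Integrable (fun ω => (X 0 ω : ℝ)) P := by
    refine Integrable.mono' (integrable_const (1:ℝ))
      ((hcast.comp (hmeas 0)).aestronglyMeasurable) ?_
    filter_upwards [hpm] with ω hω
    rcases hω 0 with h | h <;> simp [h]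
  have hindep' : Pairwise (Function.onFun (IndepFun · · P) fun i ω => (X i ω : ℝ)) := by
    intro i j hij
    exact ((hindep.indepFun hij).comp hcast hcast)
  have hident := map_eq' P p X hm hmeas
  have := strong_law_ae_real (fun i ω => (X i ω : ℝ)) hint hindep' hident
  rw [integral_step P p X hp hmeas hup hdown hpm] at this
  exact this

end auxDist

section pathwise
variable {Ω : Type*} (X : ℕ → Ω → ℤ) (ω : Ω) (p : ℝ)

lemma pathwise
    (hpm : ∀ n, X n ω = 1 ∨ X n ω = -1)
    (hhit : ∀ d : ℕ, ∃ n, walkSum X n ω = (d : ℤ))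
    (hsl : Tendsto (fun n : ℕ => ((walkSum X n ω : ℤ) : ℝ) / n) atTop (𝓝 (2*p - 1))) :
    Tendsto (fun d : ℕ => (wins X (hitTime X (d : ℤ) ω) ω : ℝ) / (hitTime X (d : ℤ) ω))
      atTop (𝓝 p) := by
  set N := fun d : ℕ => hitTime X (d : ℤ) ω with hN
  have hNd : ∀ d : ℕ, walkSum X (N d) ω = (d : ℤ) := fun d => Nat.sInf_mem (hhit d)
  have hub : ∀ n, walkSum X n ω ≤ (n : ℤ) := by
    intro n
    induction n with
    | zero => simp [walkSum]
    | succ m ih =>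
      have : walkSum X (m+1) ω = walkSum X m ω + X m ω := Finset.sum_range_succ _ _
      rcases hpm m with h | h <;> rw [this, h] <;> push_cast <;> omega
  have hdN : ∀ d : ℕ, d ≤ N d := by
    intro d
    have := hub (N d)
    rw [hNd d] at this
    exact_mod_cast this
  have hNtop : Tendsto N atTop atTop := tendsto_atTop_mono hdN tendsto_id
  have hwins : ∀ n, 2 * (wins X n ω : ℤ) = n + walkSum X n ω := by
    intro n
    induction n with
    | zero => simp [wins, walkSum]
    | succ m ih =>
      have hws : walkSum X (m+1) ω = walkSum X m ω + X m ω := Finset.sum_range_succ _ _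
      have hnotmem : m ∉ (Finset.range m).filter (fun k => X k ω = 1) := by
        simp
      rcases hpm m with h | h
      · have : wins X (m+1) ω = wins X m ω + 1 := by
          unfold wins
          rw [Finset.range_add_one, Finset.filter_insert, if_pos h,
            Finset.card_insert_of_notMem hnotmem]
        rw [this, hws, h]; push_cast; omega
      · have : wins X (m+1) ω = wins X m ω := by
          unfold wins
          rw [Finset.range_add_one, Finset.filter_insert, if_neg (by rw [h]; decide)]
        rw [this, hws, h]; push_cast; omega
  have hratio : Tendsto (fun d : ℕ => ((walkSum X (N d) ω : ℤ) : ℝ) / (N d)) atTop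
      (𝓝 (2*p - 1)) := hsl.comp hNtop
  have hlim : Tendsto (fun d : ℕ => 1/2 + (((walkSum X (N d) ω : ℤ) : ℝ) / (N d)) / 2)
      atTop (𝓝 p) := by
    have := (tendsto_const_nhds (x := (1/2 : ℝ))).add (hratio.div_const 2)
    convert this using 2
    ring
  refine hlim.congr' ?_
  filter_upwards [eventually_ge_atTop 1] with d hd
  have hNpos : 0 < N d := lt_of_lt_of_le hd (hdN d)
  have hNne : ((N d : ℕ) : ℝ) ≠ 0 := Nat.cast_ne_zero.2 hNpos.ne'
  have h2 : (wins X (N d) ω : ℝ) = ((N d : ℕ) + ((walkSum X (N d) ω : ℤ) : ℝ)) / 2 := by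
    have h3 : 2 * (wins X (N d) ω : ℝ) = ((N d : ℕ) : ℝ) + ((walkSum X (N d) ω : ℤ) : ℝ) := by
      exact_mod_cast hwins (N d)
    linarith
  rw [h2]
  change _ = _ / ((N d : ℕ) : ℝ)
  field_simp
  try ring
  try exact Or.inl trivial

end pathwise

/-- `lim_{d→∞} Var[R_{N_d}/N_d] = 0`. -/
theorem stmt_11 {Ω : Type*} [MeasurableSpace Ω] (P : Measure Ω) [IsProbabilityMeasure P]
    (p : ℝ) (hp : p ∈ Set.Ico (1/2 : ℝ) 1)
    (X : ℕ → Ω → ℤ) (hmeas : ∀ n, Measurable (X n))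
    (hindep : iIndepFun X P)
    (hup : ∀ n, P {ω | X n ω = 1} = ENNReal.ofReal p)
    (hdown : ∀ n, P {ω | X n ω = -1} = ENNReal.ofReal (1 - p))
    (hfin : ∀ d : ℕ, ∀ᵐ ω ∂P, ∃ n, walkSum X n ω = (d : ℤ)) :
    Filter.Tendsto
      (fun d : ℕ => variance (fun ω => (wins X (hitTime X (d : ℤ) ω) ω : ℝ) / (hitTime X (d : ℤ) ω)) P)
      Filter.atTop (nhds 0) := by
  set f := fun (d : ℕ) (ω : Ω) =>
    (wins X (hitTime X (d : ℤ) ω) ω : ℝ) / (hitTime X (d : ℤ) ω) with hf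
  have hfmeas : ∀ d : ℕ, Measurable (f d) := fun d => ratio_meas X hmeas (d : ℤ)
  -- uniform bound
  have hb01 : ∀ (d : ℕ) ω, 0 ≤ f d ω ∧ f d ω ≤ 1 := by
    intro d ω
    have hwn : wins X (hitTime X (d:ℤ) ω) ω ≤ hitTime X (d:ℤ) ω := by
      calc wins X (hitTime X (d:ℤ) ω) ω ≤ (Finset.range (hitTime X (d:ℤ) ω)).card :=
            Finset.card_filter_le _ _
        _ = hitTime X (d:ℤ) ω := Finset.card_range _
    rcases Nat.eq_zero_or_pos (hitTime X (d:ℤ) ω) with h | h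
    · simp [hf, h]
    · constructor
      · exact div_nonneg (Nat.cast_nonneg _) (Nat.cast_nonneg _)
      · rw [div_le_one (by exact_mod_cast h)]
        exact_mod_cast hwn
  have hbd : ∀ (d : ℕ), ∀ᵐ ω ∂P, ‖f d ω‖ ≤ 1 := by
    intro d
    filter_upwards with ω
    rw [Real.norm_eq_abs, abs_of_nonneg (hb01 d ω).1]
    exact (hb01 d ω).2
  -- a.e. pointwise convergence to p
  have hpm := ae_pm P p X hp hmeas hup hdown
  have hm := map_eq P p X hp hmeas hup hdown
  have hsl := slln P p X hp hmeas hindep hup hdown hm hpm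
  have hfin' : ∀ᵐ ω ∂P, ∀ d : ℕ, ∃ n, walkSum X n ω = (d : ℤ) := by
    rw [ae_all_iff]; exact hfin
  have hae : ∀ᵐ ω ∂P, Filter.Tendsto (fun d : ℕ => f d ω) Filter.atTop (𝓝 p) := by
    filter_upwards [hpm, hsl, hfin'] with ω h1 h2 h3
    have h2' : Filter.Tendsto (fun n : ℕ => ((walkSum X n ω : ℤ) : ℝ) / n)
        Filter.atTop (𝓝 (2*p - 1)) := by
      refine h2.congr fun n => ?_
      congr 1
      push_cast [walkSum]
      rfl
    exact pathwise X ω p h1 h3 h2'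
  have haesq : ∀ᵐ ω ∂P, Filter.Tendsto (fun d : ℕ => (f d ω)^2) Filter.atTop (𝓝 (p^2)) := by
    filter_upwards [hae] with ω hω
    exact hω.pow 2
  -- convergence of first and second moments
  have hintconst : Integrable (fun _ : Ω => (1:ℝ)) P := integrable_const 1
  have h1 : Filter.Tendsto (fun d : ℕ => ∫ ω, f d ω ∂P) Filter.atTop (𝓝 p) := by
    have := tendsto_integral_of_dominated_convergence (fun _ => (1:ℝ))
      (fun d => (hfmeas d).aestronglyMeasurable) hintconst hbd
      (by filter_upwards [hae] with ω hω; exact hω)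
    simpa using this
  have h2 : Filter.Tendsto (fun d : ℕ => ∫ ω, (f d ω)^2 ∂P) Filter.atTop (𝓝 (p^2)) := by
    have hbd2 : ∀ (d : ℕ), ∀ᵐ ω ∂P, ‖(f d ω)^2‖ ≤ 1 := by
      intro d
      filter_upwards [hbd d] with ω hω
      rw [norm_pow]
      nlinarith [norm_nonneg (f d ω)]
    have := tendsto_integral_of_dominated_convergence (fun _ => (1:ℝ))
      (fun d => ((hfmeas d).pow measurable_const).aestronglyMeasurable) hintconst hbd2
      (by filter_upwards [haesq] with ω hω; exact hω)
    simpa using this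
  -- variance formula
  have hmem : ∀ d : ℕ, MemLp (f d) 2 P := fun d =>
    MemLp.of_bound (hfmeas d).aestronglyMeasurable 1 (hbd d)
  have hvar : ∀ d : ℕ, variance (f d) P = (∫ ω, (f d ω)^2 ∂P) - (∫ ω, f d ω ∂P)^2 := by
    intro d
    rw [variance_eq_sub (hmem d)]
    congr 1
  have := h2.sub ((h1.pow 2))
  rw [show p^2 - p^2 = 0 by ring] at this
  refine Filter.Tendsto.congr (fun d => ?_) this
  rw [hvar d]
end

section
/- If r > 0 is rational and arctan(√r) is a rational multiple of π, then r ∈ {1/3, 1, 3}; in particular the smallest such rational r is 1/3. -/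
open Real

/-- Denominator of `c^2 - 2` is `c.den^2`. -/
lemma aux_den_sq_sub_two (c : ℚ) : (c ^ 2 - 2).den = c.den ^ 2 := by
  have hd : (0 : ℤ) < (c.den : ℤ) ^ 2 := by positivity
  have hden : ((c.den : ℚ)) ≠ 0 := by exact_mod_cast c.den_nz
  have h1 : IsCoprime c.num ((c.den : ℤ)) := by
    rw [Int.isCoprime_iff_gcd_eq_one]; exact c.reduced
  have hco : IsCoprime (c.num ^ 2 - 2 * (c.den : ℤ) ^ 2) ((c.den : ℤ) ^ 2) := by
    have h2 := (h1.pow (m := 2) (n := 2)).add_mul_right_left (-2)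
    have h3 : c.num ^ 2 - 2 * (c.den : ℤ) ^ 2 = c.num ^ 2 + -2 * (c.den : ℤ) ^ 2 := by ring
    rw [h3]
    convert h2 using 2 <;> ring
  have hcoN : Nat.Coprime (c.num ^ 2 - 2 * (c.den : ℤ) ^ 2).natAbs ((c.den : ℤ) ^ 2).natAbs := by
    rwa [Int.isCoprime_iff_gcd_eq_one] at hco
  have hmul : (c.num : ℚ) = c * (c.den : ℚ) := by
    have := Rat.num_div_den c
    rw [div_eq_iff hden] at this
    exact this.symm ▸ rfl
  have key : c ^ 2 - 2
      = ((c.num ^ 2 - 2 * (c.den : ℤ) ^ 2 : ℤ) : ℚ) / (((c.den : ℤ) ^ 2 : ℤ) : ℚ) := by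
    rw [eq_div_iff (by exact_mod_cast hd.ne')]
    push_cast
    rw [hmul]
    ring
  rw [key]
  have hfin := Rat.den_div_eq_of_coprime hd hcoN
  exact_mod_cast hfin

/-- Iterating `x ↦ x^2 - 2` raises the denominator to the power `2^k`. -/
lemma aux_den_iter (c : ℚ) (k : ℕ) :
    ((fun x : ℚ => x ^ 2 - 2)^[k] c).den = c.den ^ (2 ^ k) := by
  induction k with
  | zero => simp
  | succ k ih =>
    rw [Function.iterate_succ_apply', aux_den_sq_sub_two, ih, ← pow_mul, pow_succ]

/-- Niven-style core: if `2 cos (s π)` is rational for rational `s`, its denominator is 1. -/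
lemma aux_niven (s c : ℚ) (h : (c : ℝ) = 2 * Real.cos ((s : ℝ) * Real.pi)) : c.den = 1 := by
  set F : ℕ → ℚ := fun k => (fun x : ℚ => x ^ 2 - 2)^[k] c with hF
  have hFval : ∀ k : ℕ, ((F k : ℚ) : ℝ) = 2 * Real.cos ((2 : ℝ) ^ k * (s : ℝ) * Real.pi) := by
    intro k
    induction k with
    | zero => simpa [hF] using h
    | succ k ih =>
      have hiter : F (k + 1) = (F k) ^ 2 - 2 := Function.iterate_succ_apply' _ _ _
      rw [hiter]
      push_cast
      rw [ih]
      rw [show (2 : ℝ) ^ (k + 1) * (s : ℝ) * Real.pi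
            = 2 * ((2 : ℝ) ^ k * (s : ℝ) * Real.pi) by ring, Real.cos_two_mul]
      ring
  haveI : NeZero (2 * s.den) := ⟨by positivity⟩
  obtain ⟨k, l, hkl, hg⟩ : ∃ k l : ℕ, k < l ∧
      ((2 : ZMod (2 * s.den)) ^ k * (s.num : ZMod (2 * s.den))
        = (2 : ZMod (2 * s.den)) ^ l * (s.num : ZMod (2 * s.den))) := by
    obtain ⟨k, l, hne, he⟩ := Finite.exists_ne_map_eq_of_infinite
      (fun k : ℕ => (2 : ZMod (2 * s.den)) ^ k * (s.num : ZMod (2 * s.den)))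
    rcases hne.lt_or_gt with h' | h'
    · exact ⟨k, l, h', he⟩
    · exact ⟨l, k, h', he.symm⟩
  have hg' : ((2 ^ k * s.num : ℤ) : ZMod (2 * s.den)) = ((2 ^ l * s.num : ℤ) : ZMod (2 * s.den)) := by
    push_cast
    exact hg
  have hdvd : ((2 * s.den : ℕ) : ℤ) ∣ 2 ^ l * s.num - 2 ^ k * s.num :=
    ((ZMod.intCast_eq_intCast_iff _ _ _).mp hg').dvd
  obtain ⟨m, hm⟩ := hdvd
  have hsden : ((s.den : ℝ)) ≠ 0 := by exact_mod_cast s.den_nz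
  have hrateq : (2 : ℝ) ^ l * (s : ℝ) = 2 ^ k * (s : ℝ) + 2 * (m : ℝ) := by
    have hs : ((s : ℝ)) = (s.num : ℝ) / (s.den : ℝ) := by
      exact_mod_cast congrArg (fun q : ℚ => (q : ℝ)) (Rat.num_div_den s).symm
    have hmR : (2 : ℝ) ^ l * (s.num : ℝ) - 2 ^ k * (s.num : ℝ)
        = (2 * (s.den : ℝ)) * (m : ℝ) := by exact_mod_cast congrArg (fun z : ℤ => (z : ℝ)) hm
    rw [hs]
    field_simp
    field_simp at hmR
    linarith
  have hFeq : F k = F l := by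
    have hcos : Real.cos ((2 : ℝ) ^ l * (s : ℝ) * Real.pi)
        = Real.cos ((2 : ℝ) ^ k * (s : ℝ) * Real.pi) := by
      have harg : (2 : ℝ) ^ l * (s : ℝ) * Real.pi
          = (2 : ℝ) ^ k * (s : ℝ) * Real.pi + (m : ℤ) * (2 * Real.pi) := by
        push_cast
        nlinarith [hrateq, Real.pi_pos]
      rw [harg, Real.cos_add_int_mul_two_pi]
    have : ((F k : ℚ) : ℝ) = ((F l : ℚ) : ℝ) := by rw [hFval, hFval, hcos]
    exact_mod_cast this
  by_contra hden
  have hpos := c.pos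
  have h2 : 2 ≤ c.den := by omega
  have hlt : c.den ^ (2 ^ k) < c.den ^ (2 ^ l) :=
    Nat.pow_lt_pow_right h2 (Nat.pow_lt_pow_right (by norm_num) hkl)
  have heq : (F k).den = (F l).den := by rw [hFeq]
  rw [hF] at heq
  simp only [aux_den_iter] at heq
  omega

/-- If `r > 0` is rational and `arctan √r` is a rational multiple of `π`, then
`r ∈ {1/3, 1, 3}`. -/
theorem stmt_18 (r : ℝ) (hr : 0 < r) (hrat : ∃ a : ℚ, (a : ℝ) = r)
    (hang : ∃ s : ℚ, Real.arctan (Real.sqrt r) = (s : ℝ) * Real.pi) :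
    r = 1/3 ∨ r = 1 ∨ r = 3 := by
  obtain ⟨a, ha⟩ := hrat
  obtain ⟨s, hs⟩ := hang
  have ha0 : (0 : ℚ) < a := by exact_mod_cast ha ▸ hr
  have h1a : (1 : ℚ) + a ≠ 0 := by positivity
  have h1r : (0 : ℝ) < 1 + r := by linarith
  have hcos2 : Real.cos (2 * Real.arctan (Real.sqrt r)) = (1 - r) / (1 + r) := by
    rw [Real.cos_two_mul, Real.cos_arctan, Real.sq_sqrt hr.le, div_pow, one_pow,
      Real.sq_sqrt h1r.le]
    field_simp
    ring
  set c : ℚ := 2 * (1 - a) / (1 + a) with hc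
  have hcR : (c : ℝ) = 2 * ((1 - r) / (1 + r)) := by
    rw [hc]; push_cast [ha]; ring
  have hcval : (c : ℝ) = 2 * Real.cos (((2 * s : ℚ) : ℝ) * Real.pi) := by
    have harg : ((2 * s : ℚ) : ℝ) * Real.pi = 2 * Real.arctan (Real.sqrt r) := by
      rw [hs]; push_cast; ring
    rw [harg, hcos2, hcR]
  have hden := aux_niven (2 * s) c hcval
  obtain ⟨n, hn⟩ : ∃ n : ℤ, c = (n : ℚ) := ⟨c.num, by
    conv_lhs => rw [← Rat.num_div_den c, hden]
    simp⟩
  have hnR : 2 * ((1 - r) / (1 + r)) = (n : ℝ) := by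
    rw [← hcR, hn]; push_cast; ring
  have hub : 2 * ((1 - r) / (1 + r)) < 2 := by
    have : (1 - r) / (1 + r) < 1 := by rw [div_lt_one h1r]; linarith
    linarith
  have hlb : (-2 : ℝ) < 2 * ((1 - r) / (1 + r)) := by
    have : (-1 : ℝ) < (1 - r) / (1 + r) := by rw [lt_div_iff₀ h1r]; linarith
    linarith
  have hn1 : -2 < n := by
    have : (-2 : ℝ) < (n : ℝ) := hnR ▸ hlb
    exact_mod_cast this
  have hn2 : n < 2 := by
    have : ((n : ℝ)) < 2 := hnR ▸ hub
    exact_mod_cast this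
  interval_cases n
  · right; right
    push_cast at hnR
    field_simp at hnR
    linarith
  · right; left
    push_cast at hnR
    field_simp at hnR
    linarith
  · left
    push_cast at hnR
    field_simp at hnR
    linarith
end
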